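/- (Gibbs implies DLR.) Let X ⊆ 𝒜^{ℤ^d} be a subshift and f ∈ SV_d(X). If μ is a Gibbs measure for f, then for every nonempty finite Λ ⊆ ℤ^d and every Borel set A ⊆ X, the conditional expectation satisfies μ(A | 𝓕_{Λ^c})(x) = γ_Λ(A|x) for μ-almost every x ∈ X. -/

import Mathlib

open MeasureTheory Filter Topology

/-- The full shift configuration space `𝒜^{ℤ^d}`. -/
abbrev Config (d : ℕ) (A : Type*) := (Fin d → ℤ) → A

/-- The shift action of `ℤ^d`: `(T^k x)_i = x_{i+k}`. -/
def shift {d : ℕ} {A : Type*} (k : Fin d → ℤ) (x : Config d A) : Config d A :=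
  fun i => x (i + k)

/-- The ℓ∞ norm of a lattice point, `‖k‖_∞ = max_i |k_i|`. -/
def normInf {d : ℕ} (k : Fin d → ℤ) : ℕ :=
  Finset.univ.sup fun i => (k i).natAbs

/-- The box `Λ_N = {k : ‖k‖_∞ ≤ N}` as a finset. -/
noncomputable def boxF (d N : ℕ) : Finset (Fin d → ℤ) :=
  Finset.Icc (fun _ => -(N : ℤ)) (fun _ => (N : ℤ))

/-- The `n`-th variation of `f` on a subshift `X`:
`δ_n(f) = sup {|f x - f y| : x, y ∈ X, x_{Λ_n} = y_{Λ_n}}`. -/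
noncomputable def deltaVar {d : ℕ} {A : Type*} (X : Set (Config d A))
    (f : Config d A → ℝ) (n : ℕ) : ℝ :=
  sSup {r : ℝ | ∃ x ∈ X, ∃ y ∈ X,
    (∀ k : Fin d → ℤ, normInf k ≤ n → x k = y k) ∧ r = |f x - f y|}

/-- `f` is bounded on `X`. -/
def BoundedOn {d : ℕ} {A : Type*} (X : Set (Config d A)) (f : Config d A → ℝ) : Prop :=
  ∃ C : ℝ, ∀ x ∈ X, |f x| ≤ C

/-- Membership in `SV_d(X)`: bounded with `Σ_{n ≥ 1} n^{d-1} δ_n(f) < ∞`. -/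
def MemSV (d : ℕ) {A : Type*} (X : Set (Config d A)) (f : Config d A → ℝ) : Prop :=
  BoundedOn X f ∧ Summable fun n : ℕ => ((n : ℝ) + 1) ^ (d - 1) * deltaVar X f (n + 1)

/-- The sup norm of `f` over `X`. -/
noncomputable def supNormOn {d : ℕ} {A : Type*} (X : Set (Config d A))
    (f : Config d A → ℝ) : ℝ :=
  sSup {r : ℝ | ∃ x ∈ X, r = |f x|}

/-- The `SV_d` norm: `‖f‖_{SV_d} = ‖f‖_∞ + Σ_{n ≥ 1} n^{d-1} δ_n(f)`. -/
noncomputable def svNorm (d : ℕ) {A : Type*} (X : Set (Config d A))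
    (f : Config d A → ℝ) : ℝ :=
  supNormOn X f + ∑' n : ℕ, ((n : ℝ) + 1) ^ (d - 1) * deltaVar X f (n + 1)

/-- The Gibbs relation `𝔗`: pairs of points of `X` that agree outside a finite set. -/
def gibbsRel {d : ℕ} {A : Type*} (X : Set (Config d A)) :
    Set (Config d A × Config d A) :=
  {p | p.1 ∈ X ∧ p.2 ∈ X ∧ ∃ Λ : Finset (Fin d → ℤ), ∀ k ∉ Λ, p.1 k = p.2 k}

/-- The cocycle `φ_f(x,y) = Σ_{k ∈ ℤ^d} (f(T^k y) - f(T^k x))` (unordered sum). -/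
noncomputable def phiF {d : ℕ} {A : Type*} (f : Config d A → ℝ)
    (x y : Config d A) : ℝ :=
  ∑' k : Fin d → ℤ, (f (shift k y) - f (shift k x))

/-- Membership in `𝓕(X)`: homeomorphisms of `X` changing only finitely many coordinates,
uniformly. -/
def memF {d : ℕ} {A : Type*} [TopologicalSpace A] (X : Set (Config d A))
    (φ : ↥X ≃ₜ ↥X) : Prop :=
  ∃ n : ℕ, 1 ≤ n ∧ ∀ x : ↥X, ∀ k : Fin d → ℤ, n < normInf k → (φ x).1 k = x.1 k

/-- `𝓕_n(X)`. -/
def Fn {d : ℕ} {A : Type*} [TopologicalSpace A] (X : Set (Config d A)) (n : ℕ) :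
    Set (↥X ≃ₜ ↥X) :=
  {φ | (∀ x : ↥X, ∀ k : Fin d → ℤ, n < normInf k → (φ x).1 k = x.1 k) ∧
    ∀ x y : ↥X,
      ((∀ k : Fin d → ℤ, normInf k ≤ n → x.1 k = y.1 k) ↔
        (∀ k : Fin d → ℤ, normInf k ≤ n → (φ x).1 k = (φ y).1 k))}

/-- The configuration `ω x_{Λ^c}`: equal to `ω` on `Λ` and to `x` off `Λ`. -/
def patch {d : ℕ} {A : Type*} (Λ : Finset (Fin d → ℤ)) (ω : {k // k ∈ Λ} → A)
    (x : Config d A) : Config d A :=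
  fun k => if h : k ∈ Λ then ω ⟨k, h⟩ else x k

/-- `f_n = Σ_{i ∈ Λ_n} f ∘ T^i`. -/
noncomputable def fnSum (d : ℕ) {A : Type*} (f : Config d A → ℝ) (n : ℕ)
    (z : Config d A) : ℝ :=
  ∑ i ∈ boxF d n, f (shift i z)

/-- The σ-algebra `𝓕_Δ` on `X`, generated by the coordinate projections `x ↦ x_i`, `i ∈ Δ`. -/
def cylSigma {d : ℕ} {A : Type*} [MeasurableSpace A] (X : Set (Config d A))
    (Δ : Set (Fin d → ℤ)) : MeasurableSpace ↥X :=
  MeasurableSpace.comap (fun (x : ↥X) (i : ↥Δ) => x.1 i.1) MeasurableSpace.pi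

/-- `μ` is a Gibbs measure for `f`: `(φ_f, 𝔗)`-conformal. -/
def IsGibbs (d : ℕ) {A : Type*} [MeasurableSpace A] (X : Set (Config d A))
    (f : Config d A → ℝ) (μ : Measure ↥X) : Prop :=
  ∀ V W : ↥X → ↥X, Measurable V → Measurable W →
    (∀ x, W (V x) = x) → (∀ x, V (W x) = x) →
    (∀ x : ↥X, ((x.1, (V x).1) ∈ gibbsRel X)) →
    (Measure.map V μ ≪ μ ∧
      ∀ᵐ x ∂μ, (Measure.map V μ).rnDeriv μ x
        = ENNReal.ofReal (Real.exp (phiF f x.1 (W x).1)))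

/-- `μ` is a topological Gibbs measure for `f`: `(φ_f|_{𝔗⁰}, 𝔗⁰)`-conformal. -/
def IsTopGibbs (d : ℕ) {A : Type*} [TopologicalSpace A] [MeasurableSpace A]
    (X : Set (Config d A)) (f : Config d A → ℝ) (μ : Measure ↥X) : Prop :=
  ∀ φ : ↥X ≃ₜ ↥X, memF X φ →
    (Measure.map (⇑φ) μ ≪ μ ∧
      ∀ᵐ x ∂μ, (Measure.map (⇑φ) μ).rnDeriv μ x
        = ENNReal.ofReal (Real.exp (phiF f x.1 (φ.symm x).1)))

/-- Finite-volume Gibbsian ratios defining the kernel `γ_Λ`. -/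
noncomputable def gammaFn (d : ℕ) {A : Type*} [Fintype A] (X : Set (Config d A))
    (f : Config d A → ℝ) (Λ : Finset (Fin d → ℤ)) (S : Set ↥X) (x : Config d A)
    (n : ℕ) : ℝ :=
  (∑ ω : {k // k ∈ Λ} → A,
      (Subtype.val '' S).indicator (fun z => Real.exp (fnSum d f n z)) (patch Λ ω x)) /
  (∑ η : {k // k ∈ Λ} → A,
      X.indicator (fun z => Real.exp (fnSum d f n z)) (patch Λ η x))

/-- The kernel `γ_Λ(S | x)`, defined as the limit of the finite-volume ratios. -/
noncomputable def gamma (d : ℕ) {A : Type*} [Fintype A] (X : Set (Config d A))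
    (f : Config d A → ℝ) (Λ : Finset (Fin d → ℤ)) (S : Set ↥X) (x : Config d A) : ℝ :=
  limUnder atTop (gammaFn d X f Λ S x)

/-- `X` is a subshift of finite type. -/
def IsSFT {d : ℕ} {A : Type*} (X : Set (Config d A)) : Prop :=
  ∃ n : ℕ, 1 ≤ n ∧ ∃ F : Set ({k : Fin d → ℤ // normInf k ≤ n} → A),
    X = {x : Config d A |
      ∀ l : Fin d → ℤ, (fun k : {k : Fin d → ℤ // normInf k ≤ n} => shift l x k.1) ∉ F}

/-- The topological Gibbs relation `𝔗⁰`. -/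
def topGibbsRel {d : ℕ} {A : Type*} [TopologicalSpace A] (X : Set (Config d A)) :
    Set (Config d A × Config d A) :=
  {p | ∃ (hx : p.1 ∈ X) (φ : ↥X ≃ₜ ↥X), memF X φ ∧ (φ ⟨p.1, hx⟩).1 = p.2}

/-- `f` is a local function on `X`. -/
def IsLocal {d : ℕ} {A : Type*} (X : Set (Config d A)) (f : Config d A → ℝ) : Prop :=
  ∃ Λ : Finset (Fin d → ℤ), ∀ x ∈ X, ∀ y ∈ X, (∀ k ∈ Λ, x k = y k) → f x = f y


/-!
For `x ∈ X` the limit defining `γ_Λ(S | x)` exists and equals `Z_S(x) / Z_X(x)`, where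
`Z_T(x) = ∑_ω 1_T(ω x_{Λᶜ}) exp φ_f(x, ω x_{Λᶜ})`: the finite-volume ratios are this quotient with
`φ_f(x, y)` replaced by `f_n(y) - f_n(x)`, and these converge because `f ∈ SV_d(X)` makes the
series defining `φ_f` absolutely summable (the sphere of radius `n` has `O(n^{d-1})` sites). Being
a pointwise limit of measurable functions that only see `x_{Λᶜ}`, `γ_Λ(S | ·)` is
`𝓕_{Λᶜ}`-measurable.

For two patterns `p, q` on `Λ`, exchanging them wherever the result stays in `X` is a Borel
involution with graph in `𝔗`, so the Gibbs property is a change of variables with Jacobian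
`exp φ_f`. Summing it over all `p, q` and testing against `1_{C ∩ S} / Z_X`, the cocycle identity
`Z_X(ω x_{Λᶜ}) = exp φ_f(ω x_{Λᶜ}, x) Z_X(x)` gives `∫_C γ_Λ(S | ·) dμ = μ(C ∩ S)` for every
`C ∈ 𝓕_{Λᶜ}`, which characterises the conditional expectation.
-/

open Finset
open scoped ENNReal

section Lattice

variable {d : ℕ}

theorem mem_boxF {k : Fin d → ℤ} {N : ℕ} : k ∈ boxF d N ↔ normInf k ≤ N := by
  simp only [boxF, Finset.mem_Icc, normInf, Finset.sup_le_iff, Finset.mem_univ, true_implies,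
    Pi.le_def]
  refine ⟨fun h i => ?_, fun h => ⟨fun i => ?_, fun i => ?_⟩⟩ <;> grind

theorem boxF_mono : Monotone (boxF d) :=
  fun _ _ h _ hk => mem_boxF.2 ((mem_boxF.1 hk).trans h)

theorem card_boxF (N : ℕ) : #(boxF d N) = (2 * N + 1) ^ d := by
  simp only [boxF, Pi.card_Icc, Int.card_Icc, prod_const, card_univ, Fintype.card_fin]
  congr 1
  omega

theorem card_boxF_succ_sdiff_le (N : ℕ) :
    #(boxF d (N + 1) \ boxF d N) ≤ 2 * d * (2 * N + 3) ^ (d - 1) := by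
  rw [card_sdiff_of_subset (boxF_mono N.le_succ), card_boxF, card_boxF]
  grind [abs_pow_sub_pow_le (α := ℤ) (2 * N + 3) (2 * N + 1) d]

theorem normInf_le_normInf_add_add (i k : Fin d → ℤ) :
    normInf k ≤ normInf (i + k) + normInf i :=
  Finset.sup_le fun j _ => by
    have h₁ : ((i + k) j).natAbs ≤ normInf (i + k) :=
      Finset.le_sup (f := fun j => ((i + k) j).natAbs) (mem_univ j)
    have h₂ : (i j).natAbs ≤ normInf i := Finset.le_sup (f := fun j => (i j).natAbs) (mem_univ j)
    simp only [Pi.add_apply] at h₁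
    omega

/-- The sphere of radius `m + t + 2` has `O((t + 1)^{d-1})` sites, on which `g ≤ a (t + 1)`. -/
theorem sum_boxF_le {g : (Fin d → ℤ) → ℝ} {a : ℕ → ℝ} {B : ℝ} {m : ℕ} (ha : ∀ n, 0 ≤ a n)
    (hB : ∀ k, g k ≤ B) (hfar : ∀ k n, m + n < normInf k → g k ≤ a n) (N : ℕ) :
    ∑ k ∈ boxF d (m + 1 + N), g k ≤ #(boxF d (m + 1)) * B +
      2 * d * (2 * m + 5) ^ (d - 1) * ∑ t ∈ range N, ((t : ℝ) + 1) ^ (d - 1) * a (t + 1) := by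
  set c : ℝ := 2 * d * (2 * m + 5) ^ (d - 1)
  have hcard : ∀ t : ℕ, (#(boxF d (m + 1 + (t + 1)) \ boxF d (m + 1 + t)) : ℝ) ≤
      c * ((t : ℝ) + 1) ^ (d - 1) := fun t =>
    calc (#(boxF d (m + 1 + (t + 1)) \ boxF d (m + 1 + t)) : ℝ)
        ≤ 2 * d * ((2 * m + 5 : ℝ) * (t + 1)) ^ (d - 1) := by
          refine (Nat.cast_le.2 (card_boxF_succ_sdiff_le (m + 1 + t))).trans ?_
          push_cast
          gcongr
          nlinarith [t.cast_nonneg (α := ℝ), m.cast_nonneg (α := ℝ)]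
      _ = c * ((t : ℝ) + 1) ^ (d - 1) := by rw [mul_pow]; ring
  rw [sum_eq_sum_range_sdiff (fun t => boxF d (m + 1 + t)) (fun _ _ h => boxF_mono (by omega)) g N,
    mul_sum]
  gcongr with t
  · simpa using sum_le_card_nsmul _ _ _ fun k _ => hB k
  · calc ∑ k ∈ boxF d (m + 1 + (t + 1)) \ boxF d (m + 1 + t), g k
        ≤ #(boxF d (m + 1 + (t + 1)) \ boxF d (m + 1 + t)) • a (t + 1) :=
          sum_le_card_nsmul _ _ _ fun k hk => hfar k _ <| by
            rw [Finset.mem_sdiff, mem_boxF, mem_boxF] at hk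
            omega
      _ ≤ c * (((t : ℝ) + 1) ^ (d - 1) * a (t + 1)) := by
          rw [nsmul_eq_mul, ← mul_assoc]
          exact mul_le_mul_of_nonneg_right (hcard t) (ha _)

end Lattice

section Variation

variable {d : ℕ} {A : Type*} {X : Set (Config d A)} {f : Config d A → ℝ}

theorem deltaVar_nonneg (X : Set (Config d A)) (f : Config d A → ℝ) (n : ℕ) :
    0 ≤ deltaVar X f n :=
  Real.sSup_nonneg <| by rintro _ ⟨_, _, _, _, _, rfl⟩; exact abs_nonneg _

theorem abs_sub_le_deltaVar (hf : BoundedOn X f) {x y : Config d A} (hx : x ∈ X) (hy : y ∈ X)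
    {n : ℕ} (h : ∀ k, normInf k ≤ n → x k = y k) : |f x - f y| ≤ deltaVar X f n := by
  obtain ⟨C, hC⟩ := hf
  refine le_csSup ⟨2 * C, ?_⟩ ⟨x, hx, y, hy, h, rfl⟩
  rintro _ ⟨a, ha, b, hb, -, rfl⟩
  linarith [abs_sub (f a) (f b), hC a ha, hC b hb]

theorem exists_deltaVar_lt (hf : MemSV d X f) {ε : ℝ} (hε : 0 < ε) :
    ∃ n, deltaVar X f n < ε := by
  obtain ⟨n, hn⟩ := (hf.2.tendsto_atTop_zero.eventually (gt_mem_nhds hε)).exists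
  exact ⟨n + 1, (le_mul_of_one_le_left (deltaVar_nonneg X f _)
    (one_le_pow₀ (by linarith [n.cast_nonneg (α := ℝ)]))).trans_lt hn⟩

theorem continuousOn_of_memSV [TopologicalSpace A] [DiscreteTopology A] (hf : MemSV d X f) :
    ContinuousOn f X := by
  intro x hx
  refine Metric.tendsto_nhds.2 fun ε hε => ?_
  obtain ⟨n, hn⟩ := exists_deltaVar_lt hf hε
  have hU : (↑(boxF d n) : Set (Fin d → ℤ)).pi (fun k => {x k}) ∈ 𝓝 x :=
    set_pi_mem_nhds (boxF d n).finite_toSet fun _ _ => by simp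
  filter_upwards [self_mem_nhdsWithin, mem_nhdsWithin_of_mem_nhds hU] with y hy hyx
  rw [Real.dist_eq]
  exact (abs_sub_le_deltaVar hf.1 hy hx fun k hk => hyx k (mem_boxF.2 hk)).trans_lt hn

theorem phiF_self (f : Config d A → ℝ) (x : Config d A) : phiF f x x = 0 := by
  simp [phiF]

theorem phiF_swap (f : Config d A → ℝ) (x y : Config d A) : phiF f y x = -phiF f x y := by
  rw [phiF, phiF, ← tsum_neg]
  congr 1; funext k; ring

variable (hf : MemSV d X f) (hinv : ∀ k : Fin d → ℤ, ∀ x ∈ X, shift k x ∈ X)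
include hf hinv

theorem summable_abs_sub_shift {x y : Config d A} (hx : x ∈ X) (hy : y ∈ X)
    {Λ : Finset (Fin d → ℤ)} (hxy : ∀ k ∉ Λ, x k = y k) :
    Summable fun k => |f (shift k y) - f (shift k x)| := by
  obtain ⟨C, hC⟩ := hf.1
  set m := Λ.sup normInf
  have hB : ∀ k, |f (shift k y) - f (shift k x)| ≤ 2 * C := fun k => by
    linarith [abs_sub (f (shift k y)) (f (shift k x)), hC _ (hinv k y hy), hC _ (hinv k x hx)]
  have hfar : ∀ k n, m + n < normInf k → |f (shift k y) - f (shift k x)| ≤ deltaVar X f n :=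
    fun k n hk => abs_sub_le_deltaVar hf.1 (hinv k y hy) (hinv k x hx) fun i hi =>
      (hxy (i + k) fun hmem => by
        have := Finset.le_sup (f := normInf) hmem
        have := normInf_le_normInf_add_add i k
        omega).symm
  refine summable_of_sum_le (fun _ => abs_nonneg _) (c := #(boxF d (m + 1)) * (2 * C) +
    2 * d * (2 * m + 5) ^ (d - 1) * ∑' n : ℕ, ((n : ℝ) + 1) ^ (d - 1) * deltaVar X f (n + 1))
    fun u => ?_
  calc ∑ k ∈ u, |f (shift k y) - f (shift k x)|
      ≤ ∑ k ∈ boxF d (m + 1 + u.sup normInf), |f (shift k y) - f (shift k x)| :=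
        sum_le_sum_of_subset_of_nonneg (fun k hk => mem_boxF.2 <| by
          have := Finset.le_sup (f := normInf) hk
          omega) fun _ _ _ => abs_nonneg _
    _ ≤ #(boxF d (m + 1)) * (2 * C) + 2 * d * (2 * m + 5) ^ (d - 1) *
          ∑ t ∈ range (u.sup normInf), ((t : ℝ) + 1) ^ (d - 1) * deltaVar X f (t + 1) :=
        sum_boxF_le (deltaVar_nonneg X f) hB hfar _
    _ ≤ #(boxF d (m + 1)) * (2 * C) + 2 * d * (2 * m + 5) ^ (d - 1) *
          ∑' n : ℕ, ((n : ℝ) + 1) ^ (d - 1) * deltaVar X f (n + 1) := by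
        gcongr
        exact hf.2.sum_le_tsum _ fun n _ => mul_nonneg (by positivity) (deltaVar_nonneg X f _)

theorem tendsto_fnSum_sub_fnSum {x y : Config d A} (hx : x ∈ X) (hy : y ∈ X)
    {Λ : Finset (Fin d → ℤ)} (hxy : ∀ k ∉ Λ, x k = y k) :
    Tendsto (fun n => fnSum d f n y - fnSum d f n x) atTop (𝓝 (phiF f x y)) := by
  have hbox : Tendsto (boxF d) atTop atTop :=
    tendsto_atTop_finset_of_monotone boxF_mono fun k => ⟨normInf k, mem_boxF.2 le_rfl⟩
  simpa only [fnSum, phiF, Function.comp_def, sum_sub_distrib] using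
    ((summable_abs_sub_shift hf hinv hx hy hxy).of_abs.hasSum.comp hbox)

theorem phiF_add_phiF {x y z : Config d A} (hx : x ∈ X) (hy : y ∈ X) (hz : z ∈ X)
    {Λ : Finset (Fin d → ℤ)} (hxy : ∀ k ∉ Λ, x k = y k) (hyz : ∀ k ∉ Λ, y k = z k) :
    phiF f x y + phiF f y z = phiF f x z := by
  rw [phiF, phiF, phiF, ← (summable_abs_sub_shift hf hinv hx hy hxy).of_abs.tsum_add
    (summable_abs_sub_shift hf hinv hy hz hyz).of_abs]
  congr 1; funext k; ring

end Variation

section Patch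

variable {d : ℕ} {A : Type*} {Λ : Finset (Fin d → ℤ)} {ω : {k // k ∈ Λ} → A}

theorem patch_of_mem {x : Config d A} {k : Fin d → ℤ} (h : k ∈ Λ) : patch Λ ω x k = ω ⟨k, h⟩ :=
  dif_pos h

theorem patch_of_notMem {x : Config d A} {k : Fin d → ℤ} (h : k ∉ Λ) : patch Λ ω x k = x k :=
  dif_neg h

theorem patch_patch (η : {k // k ∈ Λ} → A) (x : Config d A) :
    patch Λ ω (patch Λ η x) = patch Λ ω x := by
  funext k
  by_cases h : k ∈ Λ
  · rw [patch_of_mem h, patch_of_mem h]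
  · rw [patch_of_notMem h, patch_of_notMem h, patch_of_notMem h]

theorem restrict_patch (x : Config d A) : Λ.restrict (patch Λ ω x) = ω :=
  funext fun k => patch_of_mem k.2

theorem patch_eq_self {x : Config d A} (h : Λ.restrict x = ω) : patch Λ ω x = x := by
  subst h
  funext k
  by_cases hk : k ∈ Λ
  · exact patch_of_mem hk
  · exact patch_of_notMem hk

theorem patch_congr {x y : Config d A} (h : ∀ k ∉ Λ, x k = y k) :
    patch Λ ω x = patch Λ ω y := by
  funext k
  by_cases hk : k ∈ Λ
  · rw [patch_of_mem hk, patch_of_mem hk]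
  · rw [patch_of_notMem hk, patch_of_notMem hk, h k hk]

theorem continuous_patch [TopologicalSpace A] : Continuous (patch Λ ω) :=
  continuous_pi fun k => by
    by_cases h : k ∈ Λ
    · simpa only [patch, h, dite_true] using continuous_const
    · simpa only [patch, h, dite_false] using continuous_apply k

end Patch

section Kernel

variable {d : ℕ} {A : Type*} {X : Set (Config d A)} {f : Config d A → ℝ}
  {Λ : Finset (Fin d → ℤ)} {T : Set (Config d A)} {x : Config d A}

/-- After normalisation by `partitionSum f Λ X x`, the weight `γ_Λ(· | x)` gives to the pattern
`ω` (restricted to configurations in `T`). -/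
noncomputable def patchWeight (f : Config d A → ℝ) (Λ : Finset (Fin d → ℤ))
    (T : Set (Config d A)) (ω : {k // k ∈ Λ} → A) (x : Config d A) : ℝ :=
  T.indicator (fun z => Real.exp (phiF f x z)) (patch Λ ω x)

theorem patchWeight_nonneg (ω : {k // k ∈ Λ} → A) : 0 ≤ patchWeight f Λ T ω x :=
  Set.indicator_nonneg (fun _ _ => (Real.exp_pos _).le) _

theorem tendsto_patchWeight (hf : MemSV d X f) (hinv : ∀ k : Fin d → ℤ, ∀ x ∈ X, shift k x ∈ X)
    (hx : x ∈ X) (hT : T ⊆ X) (ω : {k // k ∈ Λ} → A) :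
    Tendsto (fun n => T.indicator (fun z => Real.exp (fnSum d f n z)) (patch Λ ω x) /
      Real.exp (fnSum d f n x)) atTop (𝓝 (patchWeight f Λ T ω x)) := by
  by_cases hz : patch Λ ω x ∈ T
  · simp only [patchWeight, Set.indicator_of_mem hz, ← Real.exp_sub]
    exact (Real.continuous_exp.tendsto _).comp
      (tendsto_fnSum_sub_fnSum hf hinv hx (hT hz) fun k hk => (patch_of_notMem hk).symm)
  · simpa only [patchWeight, Set.indicator_of_notMem hz, zero_div] using tendsto_const_nhds

variable [Fintype A]

noncomputable def partitionSum (f : Config d A → ℝ) (Λ : Finset (Fin d → ℤ))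
    (T : Set (Config d A)) (x : Config d A) : ℝ :=
  ∑ ω, patchWeight f Λ T ω x

theorem partitionSum_nonneg : 0 ≤ partitionSum f Λ T x :=
  sum_nonneg fun ω _ => patchWeight_nonneg ω

theorem partitionSum_mono {T' : Set (Config d A)} (h : T ⊆ T') :
    partitionSum f Λ T x ≤ partitionSum f Λ T' x :=
  sum_le_sum fun _ _ => Set.indicator_le_indicator_of_subset h (fun _ => (Real.exp_pos _).le) _

theorem one_le_partitionSum (hx : x ∈ X) : 1 ≤ partitionSum f Λ X x :=
  calc (1 : ℝ) = patchWeight f Λ X (Λ.restrict x) x := by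
        rw [patchWeight, patch_eq_self rfl, Set.indicator_of_mem hx, phiF_self, Real.exp_zero]
    _ ≤ partitionSum f Λ X x := single_le_sum (fun ω _ => patchWeight_nonneg ω) (mem_univ _)

theorem gamma_congr {S : Set ↥X} {y : Config d A} (h : ∀ k ∉ Λ, x k = y k) :
    gamma d X f Λ S x = gamma d X f Λ S y := by
  unfold gamma gammaFn
  simp only [patch_congr h]

variable (hf : MemSV d X f) (hinv : ∀ k : Fin d → ℤ, ∀ x ∈ X, shift k x ∈ X)
include hf hinv

theorem partitionSum_eq_exp_mul {y : Config d A} (hx : x ∈ X) (hy : y ∈ X)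
    (hxy : ∀ k ∉ Λ, x k = y k) (hT : T ⊆ X) :
    partitionSum f Λ T y = Real.exp (phiF f y x) * partitionSum f Λ T x := by
  rw [partitionSum, partitionSum, mul_sum]
  refine sum_congr rfl fun ω _ => ?_
  rw [patchWeight, patchWeight, ← patch_congr hxy]
  by_cases hz : patch Λ ω x ∈ T
  · rw [Set.indicator_of_mem hz, Set.indicator_of_mem hz, ← Real.exp_add,
      phiF_add_phiF hf hinv hy hx (hT hz) (fun k hk => (hxy k hk).symm)
        (fun k hk => (patch_of_notMem hk).symm)]
  · rw [Set.indicator_of_notMem hz, Set.indicator_of_notMem hz, mul_zero]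

theorem tendsto_gammaFn (hx : x ∈ X) (S : Set ↥X) :
    Tendsto (gammaFn d X f Λ S x) atTop
      (𝓝 (partitionSum f Λ (Subtype.val '' S) x / partitionSum f Λ X x)) := by
  have hsum : ∀ T ⊆ X, Tendsto (fun n => (∑ ω : {k // k ∈ Λ} → A,
      T.indicator (fun z => Real.exp (fnSum d f n z)) (patch Λ ω x)) /
        Real.exp (fnSum d f n x)) atTop (𝓝 (partitionSum f Λ T x)) := fun T hT => by
    simpa only [partitionSum, sum_div] using
      tendsto_finsetSum _ fun ω _ => tendsto_patchWeight hf hinv hx hT ω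
  refine ((hsum _ (Subtype.coe_image_subset X S)).div (hsum X subset_rfl)
    (zero_lt_one.trans_le (one_le_partitionSum hx)).ne').congr fun n => ?_
  exact div_div_div_cancel_right₀ (Real.exp_ne_zero _) _ _

theorem gamma_eq_div (hx : x ∈ X) (S : Set ↥X) :
    gamma d X f Λ S x = partitionSum f Λ (Subtype.val '' S) x / partitionSum f Λ X x :=
  (tendsto_gammaFn hf hinv hx S).limUnder_eq

theorem gamma_mem_Icc (hx : x ∈ X) (S : Set ↥X) : gamma d X f Λ S x ∈ Set.Icc 0 1 := by
  rw [gamma_eq_div hf hinv hx]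
  have hpos := zero_lt_one.trans_le (one_le_partitionSum (f := f) (Λ := Λ) hx)
  exact ⟨div_nonneg partitionSum_nonneg hpos.le,
    (div_le_one hpos).2 (partitionSum_mono (Subtype.coe_image_subset X S))⟩

end Kernel

section CylSigma

variable {d : ℕ} {A : Type*} [MeasurableSpace A] {X : Set (Config d A)} {Δ : Set (Fin d → ℤ)}

theorem cylSigma_le (X : Set (Config d A)) (Δ : Set (Fin d → ℤ)) :
    cylSigma X Δ ≤ Subtype.instMeasurableSpace :=
  (measurable_pi_lambda _ fun i => (measurable_pi_apply i.1).comp measurable_subtype_coe).comap_le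

theorem mem_iff_of_measurableSet_cylSigma {C : Set ↥X} (hC : MeasurableSet[cylSigma X Δ] C)
    {x y : ↥X} (h : ∀ k ∈ Δ, x.1 k = y.1 k) : x ∈ C ↔ y ∈ C := by
  obtain ⟨s, -, rfl⟩ := hC
  have : (fun i : ↥Δ => x.1 i.1) = fun i => y.1 i.1 := funext fun i => h i.1 i.2
  simp only [Set.mem_preimage, this]

theorem measurable_cylSigma_of_forall_eq [Nonempty A] {β : Type*} [MeasurableSpace β]
    {g : Config d A → β} (hg : Measurable g)
    (hloc : ∀ x y : Config d A, (∀ k ∈ Δ, x k = y k) → g x = g y) :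
    Measurable[cylSigma X Δ] fun x : ↥X => g x.1 := by
  classical
  let fill : (↥Δ → A) → Config d A := fun r k =>
    if h : k ∈ Δ then r ⟨k, h⟩ else Classical.arbitrary A
  have hfill : Measurable fill := measurable_pi_lambda _ fun k => by
    by_cases h : k ∈ Δ
    · simpa only [fill, h, dite_true] using measurable_pi_apply (⟨k, h⟩ : ↥Δ)
    · simpa only [fill, h, dite_false] using measurable_const
  have hg_fill : (fun x : ↥X => g x.1) = (g ∘ fill) ∘ fun x i => x.1 i.1 :=
    funext fun x => hloc _ _ fun k hk => by simp only [fill, hk, dite_true]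
  rw [hg_fill]
  exact (hg.comp hfill).comp (Measurable.of_comap_le le_rfl)

end CylSigma

section Measurability

variable {d : ℕ} {A : Type*} [Fintype A] [TopologicalSpace A] [DiscreteTopology A]
  [MeasurableSpace A] [BorelSpace A] {X : Set (Config d A)} {f : Config d A → ℝ}
  {Λ : Finset (Fin d → ℤ)} {T : Set (Config d A)}

variable (hf : MemSV d X f) (hinv : ∀ k : Fin d → ℤ, ∀ x ∈ X, shift k x ∈ X) (hX : IsClosed X)
include hf hinv hX

theorem measurable_indicator_exp_fnSum (hT : MeasurableSet T) (hTX : T ⊆ X) (n : ℕ) :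
    Measurable (T.indicator fun z => Real.exp (fnSum d f n z)) := by
  classical
  have hcont : ContinuousOn (fun z => Real.exp (fnSum d f n z)) X :=
    Real.continuous_exp.comp_continuousOn <| continuousOn_finsetSum _ fun i _ =>
      (continuousOn_of_memSV hf).comp (continuous_pi fun k => continuous_apply (k + i)).continuousOn
        fun z hz => hinv i z hz
  have := (hcont.measurable_piecewise (g := 0) continuousOn_const hX.measurableSet).indicator hT
  rwa [Set.piecewise_eq_indicator, Set.indicator_indicator, Set.inter_eq_left.2 hTX] at this

theorem measurable_patchWeight (hT : MeasurableSet T) (hTX : T ⊆ X) (ω : {k // k ∈ Λ} → A) :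
    Measurable fun x : ↥X => patchWeight f Λ T ω x.1 := by
  refine measurable_of_tendsto_metrizable (f := fun n (x : ↥X) =>
    T.indicator (fun z => Real.exp (fnSum d f n z)) (patch Λ ω x.1) /
      X.indicator (fun z => Real.exp (fnSum d f n z)) x.1) (fun n => ?_)
    (tendsto_pi_nhds.2 fun x => ?_)
  · exact ((measurable_indicator_exp_fnSum hf hinv hX hT hTX n).comp
      (continuous_patch.measurable.comp measurable_subtype_coe)).div
      ((measurable_indicator_exp_fnSum hf hinv hX hX.measurableSet subset_rfl n).comp
        measurable_subtype_coe)
  · simpa only [Set.indicator_of_mem x.2] using tendsto_patchWeight hf hinv x.2 hTX ω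

theorem measurable_partitionSum (hT : MeasurableSet T) (hTX : T ⊆ X) :
    Measurable fun x : ↥X => partitionSum f Λ T x.1 :=
  Finset.measurable_sum _ fun ω _ => measurable_patchWeight hf hinv hX hT hTX ω

theorem measurable_gamma {S : Set ↥X} (hS : MeasurableSet S) :
    Measurable (gamma d X f Λ S) := by
  have hsum : ∀ {T}, MeasurableSet T → T ⊆ X → ∀ n, Measurable fun x => ∑ ω : {k // k ∈ Λ} → A,
      T.indicator (fun z => Real.exp (fnSum d f n z)) (patch Λ ω x) := fun hT hTX n =>
    Finset.measurable_sum _ fun ω _ =>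
      (measurable_indicator_exp_fnSum hf hinv hX hT hTX n).comp continuous_patch.measurable
  exact (StronglyMeasurable.limUnder fun n =>
    ((hsum (hX.measurableSet.subtype_image hS) (Subtype.coe_image_subset X S) n).div
      (hsum hX.measurableSet subset_rfl n)).stronglyMeasurable).measurable

theorem measurable_gamma_cylSigma [Nonempty A] {S : Set ↥X} (hS : MeasurableSet S) :
    Measurable[cylSigma X (↑Λ)ᶜ] fun x : ↥X => gamma d X f Λ S x.1 :=
  measurable_cylSigma_of_forall_eq (measurable_gamma hf hinv hX hS) fun _ _ h =>
    gamma_congr fun k hk => h k hk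

end Measurability

section Swap

variable {d : ℕ} {A : Type*} {X : Set (Config d A)} {Λ : Finset (Fin d → ℤ)}
  {ω p q : {k // k ∈ Λ} → A} {x : ↥X}

def patternSet (X : Set (Config d A)) (Λ : Finset (Fin d → ℤ)) (ω : {k // k ∈ Λ} → A) :
    Set ↥X :=
  (fun x : ↥X => Λ.restrict x.1) ⁻¹' {ω}

def patchable (X : Set (Config d A)) (Λ : Finset (Fin d → ℤ)) (ω : {k // k ∈ Λ} → A) :
    Set ↥X :=
  {x | patch Λ ω x.1 ∈ X}

open Classical in
noncomputable def patchIn (X : Set (Config d A)) (Λ : Finset (Fin d → ℤ))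
    (ω : {k // k ∈ Λ} → A) (x : ↥X) : ↥X :=
  ⟨if patch Λ ω x.1 ∈ X then patch Λ ω x.1 else x.1, by split_ifs with h; exacts [h, x.2]⟩

theorem coe_patchIn_of_mem (h : x ∈ patchable X Λ ω) : (patchIn X Λ ω x).1 = patch Λ ω x.1 :=
  if_pos h

theorem patchIn_eq_off (x : ↥X) : ∀ k ∉ Λ, x.1 k = (patchIn X Λ ω x).1 k := fun k hk => by
  by_cases h : x ∈ patchable X Λ ω
  · rw [coe_patchIn_of_mem h, patch_of_notMem hk]
  · exact congrFun (if_neg h).symm k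

theorem patchIn_mem_patternSet_inter (h : x ∈ patternSet X Λ p ∩ patchable X Λ q) :
    patchIn X Λ q x ∈ patternSet X Λ q ∩ patchable X Λ p := by
  refine ⟨?_, ?_⟩
  · simp only [patternSet, Set.mem_preimage, coe_patchIn_of_mem h.2, restrict_patch,
      Set.mem_singleton_iff]
  · change patch Λ p (patchIn X Λ q x).1 ∈ X
    rw [coe_patchIn_of_mem h.2, patch_patch, patch_eq_self h.1]
    exact x.2

theorem patchIn_patchIn (h : x ∈ patternSet X Λ p ∩ patchable X Λ q) :
    patchIn X Λ p (patchIn X Λ q x) = x :=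
  Subtype.ext <| by
    rw [coe_patchIn_of_mem (patchIn_mem_patternSet_inter h).2, coe_patchIn_of_mem h.2,
      patch_patch, patch_eq_self h.1]

open Classical in
noncomputable def swapPatterns (X : Set (Config d A)) (Λ : Finset (Fin d → ℤ))
    (p q : {k // k ∈ Λ} → A) (x : ↥X) : ↥X :=
  if x ∈ patternSet X Λ p ∩ patchable X Λ q then patchIn X Λ q x
  else if x ∈ patternSet X Λ q ∩ patchable X Λ p then patchIn X Λ p x else x

theorem swapPatterns_of_mem_left (h : x ∈ patternSet X Λ p ∩ patchable X Λ q) :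
    swapPatterns X Λ p q x = patchIn X Λ q x :=
  if_pos h

theorem swapPatterns_of_mem_right (h : x ∈ patternSet X Λ q ∩ patchable X Λ p) :
    swapPatterns X Λ p q x = patchIn X Λ p x := by
  by_cases h' : x ∈ patternSet X Λ p ∩ patchable X Λ q
  · obtain rfl : p = q := h'.1.symm.trans h.1
    exact if_pos h'
  · rw [swapPatterns, if_neg h', if_pos h]

theorem swapPatterns_swapPatterns (x : ↥X) :
    swapPatterns X Λ p q (swapPatterns X Λ p q x) = x := by
  by_cases h₁ : x ∈ patternSet X Λ p ∩ patchable X Λ q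
  · rw [swapPatterns_of_mem_left h₁,
      swapPatterns_of_mem_right (patchIn_mem_patternSet_inter h₁), patchIn_patchIn h₁]
  by_cases h₂ : x ∈ patternSet X Λ q ∩ patchable X Λ p
  · rw [swapPatterns_of_mem_right h₂,
      swapPatterns_of_mem_left (patchIn_mem_patternSet_inter h₂), patchIn_patchIn h₂]
  have hx : swapPatterns X Λ p q x = x := by rw [swapPatterns, if_neg h₁, if_neg h₂]
  rw [hx, hx]

theorem swapPatterns_mem_iff :
    swapPatterns X Λ p q x ∈ patternSet X Λ p ∩ patchable X Λ q ↔
      x ∈ patternSet X Λ q ∩ patchable X Λ p := by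
  refine ⟨fun h => ?_, fun h => ?_⟩
  · rw [← swapPatterns_swapPatterns (p := p) (q := q) x, swapPatterns_of_mem_left h]
    exact patchIn_mem_patternSet_inter h
  · rw [swapPatterns_of_mem_right h]
    exact patchIn_mem_patternSet_inter h

theorem swapPatterns_eq_off (x : ↥X) : ∀ k ∉ Λ, x.1 k = (swapPatterns X Λ p q x).1 k := by
  unfold swapPatterns
  split_ifs
  exacts [patchIn_eq_off x, patchIn_eq_off x, fun _ _ => rfl]

variable [TopologicalSpace A] [DiscreteTopology A] [MeasurableSpace A] [BorelSpace A] [Finite A]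

theorem measurableSet_patternSet (X : Set (Config d A)) (Λ : Finset (Fin d → ℤ))
    (ω : {k // k ∈ Λ} → A) : MeasurableSet (patternSet X Λ ω) :=
  ((Finset.measurable_restrict Λ).comp measurable_subtype_coe) (measurableSet_singleton ω)

theorem measurableSet_patchable (hX : IsClosed X) (ω : {k // k ∈ Λ} → A) :
    MeasurableSet (patchable X Λ ω) :=
  (continuous_patch.measurable.comp measurable_subtype_coe) hX.measurableSet

theorem measurable_patchIn (hX : IsClosed X) (ω : {k // k ∈ Λ} → A) :
    Measurable (patchIn X Λ ω) := by
  classical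
  exact (Measurable.ite (measurableSet_patchable hX ω)
    (continuous_patch.measurable.comp measurable_subtype_coe) measurable_subtype_coe).subtype_mk

theorem measurable_swapPatterns (hX : IsClosed X) (p q : {k // k ∈ Λ} → A) :
    Measurable (swapPatterns X Λ p q) := by
  classical
  exact Measurable.ite ((measurableSet_patternSet X Λ p).inter (measurableSet_patchable hX q))
    (measurable_patchIn hX q) <| Measurable.ite
      ((measurableSet_patternSet X Λ q).inter (measurableSet_patchable hX p))
      (measurable_patchIn hX p) measurable_id

end Swap

section Gibbs

variable {d : ℕ} {A : Type*} [Fintype A] [TopologicalSpace A] [DiscreteTopology A]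
  [MeasurableSpace A] [BorelSpace A] {X : Set (Config d A)} {f : Config d A → ℝ}
  {Λ : Finset (Fin d → ℤ)} {μ : Measure ↥X}

theorem lintegral_eq_sum_setLIntegral_patternSet (Λ : Finset (Fin d → ℤ)) (F : ↥X → ℝ≥0∞) :
    ∫⁻ x, F x ∂μ = ∑ ω, ∫⁻ x in patternSet X Λ ω, F x ∂μ := by
  have hcover : ⋃ ω, patternSet X Λ ω = Set.univ :=
    Set.eq_univ_of_forall fun x => Set.mem_iUnion.2 ⟨Λ.restrict x.1, rfl⟩
  rw [← tsum_fintype (L := .unconditional _), ← lintegral_iUnion (measurableSet_patternSet X Λ)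
    (pairwise_disjoint_fiber _), hcover, Measure.restrict_univ]

theorem lintegral_comp_swapPatterns [IsFiniteMeasure μ] (hX : IsClosed X)
    (hμ : IsGibbs d X f μ) (p q : {k // k ∈ Λ} → A) {G : ↥X → ℝ≥0∞} (hG : Measurable G) :
    ∫⁻ x, G (swapPatterns X Λ p q x) ∂μ =
      ∫⁻ x, G x * ENNReal.ofReal (Real.exp (phiF f x.1 (swapPatterns X Λ p q x).1)) ∂μ := by
  have hV := measurable_swapPatterns (Λ := Λ) hX p q
  obtain ⟨hac, hrn⟩ := hμ _ _ hV hV swapPatterns_swapPatterns swapPatterns_swapPatterns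
    fun x => ⟨x.2, (swapPatterns X Λ p q x).2, Λ, swapPatterns_eq_off x⟩
  rw [← lintegral_map hG hV, ← lintegral_rnDeriv_mul hac hG.aemeasurable]
  exact lintegral_congr_ae (hrn.mono fun x hx => by simp only [hx, mul_comm])

/-- The change of variables `x ↦ swapPatterns X Λ p q x`, read on the pieces where it acts as
`patchIn X Λ p` and as `patchIn X Λ q` respectively. -/
theorem setLIntegral_patchIn [IsFiniteMeasure μ] (hX : IsClosed X) (hμ : IsGibbs d X f μ)
    (p q : {k // k ∈ Λ} → A) {H : ↥X → ℝ≥0∞} (hH : Measurable H) :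
    ∫⁻ x in patternSet X Λ q, (patchable X Λ p).indicator (fun x => H (patchIn X Λ p x)) x ∂μ =
      ∫⁻ x in patternSet X Λ p, H x * ENNReal.ofReal (patchWeight f Λ X q x.1) ∂μ := by
  set G := (patternSet X Λ p ∩ patchable X Λ q).indicator H with hG
  rw [← lintegral_indicator (measurableSet_patternSet X Λ q),
    ← lintegral_indicator (measurableSet_patternSet X Λ p)]
  calc _ = ∫⁻ x, G (swapPatterns X Λ p q x) ∂μ := lintegral_congr fun x => by
        rw [Set.indicator_indicator, hG]
        by_cases hx : x ∈ patternSet X Λ q ∩ patchable X Λ p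
        · rw [Set.indicator_of_mem hx, Set.indicator_of_mem (swapPatterns_mem_iff.2 hx),
            swapPatterns_of_mem_right hx]
        · rw [Set.indicator_of_notMem hx,
            Set.indicator_of_notMem (mt swapPatterns_mem_iff.1 hx)]
    _ = ∫⁻ x, G x * ENNReal.ofReal (Real.exp (phiF f x.1 (swapPatterns X Λ p q x).1)) ∂μ :=
        lintegral_comp_swapPatterns hX hμ p q (hH.indicator
          ((measurableSet_patternSet X Λ p).inter (measurableSet_patchable hX q)))
    _ = _ := lintegral_congr fun x => by
        rw [hG]
        by_cases hx : x ∈ patternSet X Λ p ∩ patchable X Λ q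
        · rw [Set.indicator_of_mem hx, Set.indicator_of_mem hx.1, swapPatterns_of_mem_left hx,
            coe_patchIn_of_mem hx.2, patchWeight,
            Set.indicator_of_mem (show patch Λ q x.1 ∈ X from hx.2)]
        · rw [Set.indicator_of_notMem hx, zero_mul]
          by_cases hp : x ∈ patternSet X Λ p
          · rw [Set.indicator_of_mem hp, patchWeight,
              Set.indicator_of_notMem (show patch Λ q x.1 ∉ X from fun h => hx ⟨hp, h⟩),
              ENNReal.ofReal_zero, mul_zero]
          · rw [Set.indicator_of_notMem hp]

variable (hf : MemSV d X f) (hinv : ∀ k : Fin d → ℤ, ∀ x ∈ X, shift k x ∈ X) (hX : IsClosed X)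
  (hμ : IsGibbs d X f μ)
include hf hinv hX hμ

theorem lintegral_sum_patchIn [IsFiniteMeasure μ] {H : ↥X → ℝ≥0∞} (hH : Measurable H) :
    ∫⁻ x, ∑ p, (patchable X Λ p).indicator (fun x => H (patchIn X Λ p x)) x ∂μ =
      ∫⁻ x, H x * ENNReal.ofReal (partitionSum f Λ X x.1) ∂μ := by
  have hW : ∀ q, Measurable fun x : ↥X => H x * ENNReal.ofReal (patchWeight f Λ X q x.1) :=
    fun q => hH.mul (measurable_patchWeight hf hinv hX hX.measurableSet subset_rfl q).ennreal_ofReal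
  calc ∫⁻ x, ∑ p, (patchable X Λ p).indicator (fun x => H (patchIn X Λ p x)) x ∂μ
      = ∑ p, ∑ q, ∫⁻ x in patternSet X Λ q,
          (patchable X Λ p).indicator (fun x => H (patchIn X Λ p x)) x ∂μ := by
        have hterm : ∀ p, Measurable
            ((patchable X Λ p).indicator fun x => H (patchIn X Λ p x)) := fun p =>
          (hH.comp (measurable_patchIn hX p)).indicator (measurableSet_patchable hX p)
        rw [lintegral_finsetSum _ fun p _ => hterm p]
        exact sum_congr rfl fun p _ => lintegral_eq_sum_setLIntegral_patternSet Λ _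
    _ = ∑ p, ∑ q, ∫⁻ x in patternSet X Λ p, H x * ENNReal.ofReal (patchWeight f Λ X q x.1) ∂μ :=
        sum_congr rfl fun p _ => sum_congr rfl fun q _ => setLIntegral_patchIn hX hμ p q hH
    _ = ∑ q, ∫⁻ x, H x * ENNReal.ofReal (patchWeight f Λ X q x.1) ∂μ := by
        rw [sum_comm]
        exact sum_congr rfl fun q _ => (lintegral_eq_sum_setLIntegral_patternSet Λ _).symm
    _ = ∫⁻ x, H x * ENNReal.ofReal (partitionSum f Λ X x.1) ∂μ := by
        rw [← lintegral_finsetSum _ fun q _ => hW q]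
        refine lintegral_congr fun x => ?_
        rw [← mul_sum, partitionSum, ENNReal.ofReal_sum_of_nonneg fun q _ => patchWeight_nonneg q]

end Gibbs

section DLR

variable {d : ℕ} {A : Type*} [Fintype A] [MeasurableSpace A] {X : Set (Config d A)}
  {f : Config d A → ℝ} {Λ : Finset (Fin d → ℤ)} {μ : Measure ↥X} {S C : Set ↥X}

variable (hf : MemSV d X f) (hinv : ∀ k : Fin d → ℤ, ∀ x ∈ X, shift k x ∈ X)
include hf hinv

/-- The cocycle identity `Z_X(ω x_{Λᶜ}) = exp φ_f(ω x_{Λᶜ}, x) Z_X(x)` turns `Z_X(ω x_{Λᶜ})⁻¹`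
into the `ω`-term of `γ_Λ(S | x)`. -/
theorem sum_indicator_patchIn_eq (hC : MeasurableSet[cylSigma X (↑Λ)ᶜ] C) (x : ↥X) :
    ∑ p, (patchable X Λ p).indicator (fun y => (C ∩ S).indicator
        (fun z => ENNReal.ofReal (partitionSum f Λ X z.1)⁻¹) (patchIn X Λ p y)) x =
      C.indicator (fun y => ENNReal.ofReal (gamma d X f Λ S y.1)) x := by
  have hZ := zero_lt_one.trans_le (one_le_partitionSum (f := f) (Λ := Λ) x.2)
  by_cases hxC : x ∈ C
  swap
  · rw [Set.indicator_of_notMem hxC]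
    refine sum_eq_zero fun p _ => Set.indicator_apply_eq_zero.2 fun _ =>
      Set.indicator_of_notMem (fun h => hxC ?_) _
    exact (mem_iff_of_measurableSet_cylSigma hC fun k hk => patchIn_eq_off x k hk).2 h.1
  rw [Set.indicator_of_mem hxC, gamma_eq_div hf hinv x.2, div_eq_mul_inv, partitionSum, sum_mul,
    ENNReal.ofReal_sum_of_nonneg fun p _ => mul_nonneg (patchWeight_nonneg p) (inv_nonneg.2 hZ.le)]
  refine sum_congr rfl fun p _ => ?_
  by_cases hp : x ∈ patchable X Λ p
  swap
  · rw [Set.indicator_of_notMem hp, patchWeight, Set.indicator_of_notMem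
      (fun h => hp (Subtype.coe_image_subset X S h)), zero_mul, ENNReal.ofReal_zero]
  have hy := coe_patchIn_of_mem hp
  have hyC : patchIn X Λ p x ∈ C :=
    (mem_iff_of_measurableSet_cylSigma hC fun k hk => patchIn_eq_off x k hk).1 hxC
  rw [Set.indicator_of_mem hp]
  by_cases hyS : patchIn X Λ p x ∈ S
  · rw [Set.indicator_of_mem (show patchIn X Λ p x ∈ C ∩ S from ⟨hyC, hyS⟩), patchWeight,
      Set.indicator_of_mem (show patch Λ p x.1 ∈ Subtype.val '' S from ⟨_, hyS, hy⟩),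
      partitionSum_eq_exp_mul hf hinv x.2 (patchIn X Λ p x).2 (patchIn_eq_off x) subset_rfl,
      mul_inv, ← Real.exp_neg, hy, phiF_swap, neg_neg]
  · rw [Set.indicator_of_notMem (fun h => hyS h.2), patchWeight, Set.indicator_of_notMem, zero_mul,
      ENNReal.ofReal_zero]
    rintro ⟨s, hs, hse⟩
    exact hyS (by rwa [show patchIn X Λ p x = s from Subtype.ext (hy.trans hse.symm)])

variable [TopologicalSpace A] [DiscreteTopology A] [BorelSpace A] (hX : IsClosed X)
  (hμ : IsGibbs d X f μ)
include hX hμ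

theorem setLIntegral_gamma [IsFiniteMeasure μ] (hS : MeasurableSet S)
    (hC : MeasurableSet[cylSigma X (↑Λ)ᶜ] C) :
    ∫⁻ x in C, ENNReal.ofReal (gamma d X f Λ S x.1) ∂μ = μ (C ∩ S) := by
  have hC' := cylSigma_le X _ C hC
  have hH : Measurable
      ((C ∩ S).indicator fun z : ↥X => ENNReal.ofReal (partitionSum f Λ X z.1)⁻¹) :=
    (measurable_partitionSum hf hinv hX hX.measurableSet subset_rfl).inv.ennreal_ofReal.indicator
      (hC'.inter hS)
  rw [← lintegral_indicator hC', ← lintegral_indicator_one (hC'.inter hS)]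
  simp_rw [← sum_indicator_patchIn_eq hf hinv hC]
  rw [lintegral_sum_patchIn hf hinv hX hμ hH]
  refine lintegral_congr fun x => ?_
  by_cases hx : x ∈ C ∩ S
  · rw [Set.indicator_of_mem hx, Set.indicator_of_mem hx, Pi.one_apply,
      ← ENNReal.ofReal_mul (inv_nonneg.2 partitionSum_nonneg),
      inv_mul_cancel₀ (zero_lt_one.trans_le (one_le_partitionSum x.2)).ne', ENNReal.ofReal_one]
  · rw [Set.indicator_of_notMem hx, Set.indicator_of_notMem hx, zero_mul]

theorem setIntegral_gamma [IsFiniteMeasure μ] (hS : MeasurableSet S)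
    (hC : MeasurableSet[cylSigma X (↑Λ)ᶜ] C) :
    ∫ x in C, gamma d X f Λ S x.1 ∂μ = ∫ x in C, S.indicator (fun _ => (1 : ℝ)) x ∂μ := by
  rw [integral_eq_lintegral_of_nonneg_ae (ae_of_all _ fun x => (gamma_mem_Icc hf hinv x.2 S).1)
      ((measurable_gamma hf hinv hX hS).comp measurable_subtype_coe).aestronglyMeasurable,
    setLIntegral_gamma hf hinv hX hμ hS hC, integral_indicator_const _ hS, smul_eq_mul, mul_one,
    Measure.real, Measure.restrict_apply hS, Set.inter_comm]

end DLR

theorem gibbs_implies_DLR_general {d : ℕ} {A : Type*} [Fintype A] [Nonempty A]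
    [TopologicalSpace A] [DiscreteTopology A] [MeasurableSpace A] [BorelSpace A]
    (X : Set (Config d A)) (hcl : IsClosed X)
    (hinv : ∀ k : Fin d → ℤ, ∀ x ∈ X, shift k x ∈ X)
    (f : Config d A → ℝ) (hf : MemSV d X f)
    (μ : Measure ↥X) (hμp : IsProbabilityMeasure μ) (hμ : IsGibbs d X f μ) :
    ∀ Λ : Finset (Fin d → ℤ), Λ.Nonempty → ∀ S : Set ↥X, MeasurableSet S →
      ∀ᵐ y ∂μ,
        (μ[S.indicator (fun _ => (1 : ℝ)) | cylSigma X ((↑Λ : Set (Fin d → ℤ))ᶜ)]) y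
          = gamma d X f Λ S y.1 := by
  intro Λ _ S hS
  have hγ := measurable_gamma_cylSigma hf hinv hcl (Λ := Λ) hS
  have hγ_int : Integrable (fun x : ↥X => gamma d X f Λ S x.1) μ :=
    Integrable.of_mem_Icc 0 1
      ((measurable_gamma hf hinv hcl hS).comp measurable_subtype_coe).aemeasurable
      (ae_of_all _ fun x => gamma_mem_Icc hf hinv x.2 S)
  exact (ae_eq_condExp_of_forall_setIntegral_eq (cylSigma_le X _)
    ((integrable_const (1 : ℝ)).indicator hS) (fun C _ _ => hγ_int.integrableOn)
    (fun C hC _ => setIntegral_gamma hf hinv hcl hμ hS hC) hγ.aestronglyMeasurable).symm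

/-- **Gibbs implies DLR.** If `μ` is a Gibbs measure for `f ∈ SV_d(X)`,
then for every nonempty finite `Λ` and every Borel `S ⊆ X`,
`μ(S | 𝓕_{Λ^c}) = γ_Λ(S|·)` μ-a.e. -/
theorem gibbs_implies_DLR {d : ℕ} (hd : 1 ≤ d) {A : Type*} [Fintype A] [Nonempty A]
    [TopologicalSpace A] [DiscreteTopology A] [MeasurableSpace A] [BorelSpace A]
    (X : Set (Config d A)) (hne : X.Nonempty) (hcl : IsClosed X)
    (hinv : ∀ k : Fin d → ℤ, ∀ x ∈ X, shift k x ∈ X)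
    (f : Config d A → ℝ) (hf : MemSV d X f)
    (μ : Measure ↥X) (hμp : IsProbabilityMeasure μ) (hμ : IsGibbs d X f μ) :
    ∀ Λ : Finset (Fin d → ℤ), Λ.Nonempty → ∀ S : Set ↥X, MeasurableSet S →
      ∀ᵐ y ∂μ,
        (μ[S.indicator (fun _ => (1 : ℝ)) | cylSigma X ((↑Λ : Set (Fin d → ℤ))ᶜ)]) y
          = gamma d X f Λ S y.1 :=
  gibbs_implies_DLR_general X hcl hinv f hf μ hμp hμ
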